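/- arXiv:1912.06463 — 8 statements merged into one kernel-verified Lean document; each statement's English description precedes it below -/
import Mathlib

section
/- Let Σ be a 2N×2N real matrix with mode-ordered correlation blocks σ_jk. Suppose there exist real 2×2 matrices S₁,…,S_N each of determinant 1, a function λ : {1,…,N} → ℝ with λ_j > 0 for all j, a symmetric real N×N matrix V, and real numbers c_jk, such that for all j ≠ k one has S_j · σ_jk · S_kᵀ = [[0, λ_j V_jk],[λ_k V_jk, c_jk]] (i.e. the GLU-transformed state is a valid Gaussian graph state, with diagonal U). Then det(σ_jk) ≤ 0 for all j ≠ k. -/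
open Matrix

/-- The mode-ordered 2×2 correlation block `σ_jk` of a quadrature-ordered covariance
matrix: it collects the `(Q_j,P_j)–(Q_k,P_k)` covariances. -/
def modeBlock {N : ℕ} (A : Matrix (Fin N ⊕ Fin N) (Fin N ⊕ Fin N) ℝ) (j k : Fin N) :
    Matrix (Fin 2) (Fin 2) ℝ :=
  !![A (Sum.inl j) (Sum.inl k), A (Sum.inl j) (Sum.inr k);
     A (Sum.inr j) (Sum.inl k), A (Sum.inr j) (Sum.inr k)]

/-! A Gaussian local unitary preserves the determinant of every correlation block, and a
graph-state block `[[0, λ_j V_jk], [λ_k V_jk, c_jk]]` has determinant `-λ_j λ_k V_jk² ≤ 0`. -/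

namespace Matrix

theorem det_mul_mul_transpose_of_det_eq_one {n R : Type*} [Fintype n] [DecidableEq n]
    [CommRing R] {A B : Matrix n n R} (hA : A.det = 1) (hB : B.det = 1) (M : Matrix n n R) :
    (A * M * Bᵀ).det = M.det := by
  rw [det_mul, det_mul, det_transpose, hA, hB, one_mul, mul_one]

theorem det_fin_two_of_zero {R : Type*} [CommRing R] (b c d : R) :
    !![0, b; c, d].det = -(b * c) := by
  rw [det_fin_two_of, zero_mul, zero_sub]

theorem det_fin_two_of_zero_mul_nonpos {R : Type*} [CommRing R] [LinearOrder R]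
    [IsStrictOrderedRing R] {a b : R} (ha : 0 ≤ a) (hb : 0 ≤ b) (v d : R) :
    !![0, a * v; b * v, d].det ≤ 0 := by
  rw [det_fin_two_of_zero, neg_nonpos]
  calc 0 ≤ a * b * (v * v) := mul_nonneg (mul_nonneg ha hb) (mul_self_nonneg v)
    _ = a * v * (b * v) := by ring

end Matrix

theorem det_nonpos_of_GLU_equiv_graphState_general {N : ℕ}
    (Sig : Matrix (Fin N ⊕ Fin N) (Fin N ⊕ Fin N) ℝ)
    (S : Fin N → Matrix (Fin 2) (Fin 2) ℝ) (hS : ∀ j, (S j).det = 1)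
    (lam : Fin N → ℝ) (hlam : ∀ j, 0 < lam j)
    (V : Matrix (Fin N) (Fin N) ℝ)
    (c : Fin N → Fin N → ℝ)
    (h : ∀ j k, j ≠ k →
      S j * modeBlock Sig j k * (S k)ᵀ
        = !![0, lam j * V j k; lam k * V j k, c j k]) :
    ∀ j k, j ≠ k → (modeBlock Sig j k).det ≤ 0 := by
  intro j k hjk
  rw [← det_mul_mul_transpose_of_det_eq_one (hS j) (hS k), h j k hjk]
  exact det_fin_two_of_zero_mul_nonpos (hlam j).le (hlam k).le _ _

/-- if the mode-ordered blocks of `Σ` are carried by GLUs `S_j`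
(real 2×2 matrices of determinant 1) to the graph-state form
`S_j σ_jk S_kᵀ = [[0, λ_j V_jk],[λ_k V_jk, c_jk]]` with `λ_j > 0` and `V` symmetric
(i.e. the transformed state is a valid Gaussian graph state with diagonal `U`),
then `det σ_jk ≤ 0` for all `j ≠ k`. -/
theorem det_nonpos_of_GLU_equiv_graphState {N : ℕ}
    (Sig : Matrix (Fin N ⊕ Fin N) (Fin N ⊕ Fin N) ℝ)
    (S : Fin N → Matrix (Fin 2) (Fin 2) ℝ) (hS : ∀ j, (S j).det = 1)
    (lam : Fin N → ℝ) (hlam : ∀ j, 0 < lam j)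
    (V : Matrix (Fin N) (Fin N) ℝ) (hV : V.IsSymm)
    (c : Fin N → Fin N → ℝ)
    (h : ∀ j k, j ≠ k →
      S j * modeBlock Sig j k * (S k)ᵀ
        = !![0, lam j * V j k; lam k * V j k, c j k]) :
    ∀ j k, j ≠ k → (modeBlock Sig j k).det ≤ 0 :=
  det_nonpos_of_GLU_equiv_graphState_general Sig S hS lam hlam V c h
end

section
/- Sufficient criterion for irreducible hidden entanglement: let Σ be a 2N×2N real matrix with mode-ordered correlation blocks σ_jk. If there exist indices j₀ ≠ k₀ with det(σ_{j₀k₀}) > 0, then there exist NO real 2×2 matrices S₁,…,S_N of determinant 1, positive reals λ₁,…,λ_N, symmetric real N×N matrix V, and reals c_jk such that S_j · σ_jk · S_kᵀ = [[0, λ_j V_jk],[λ_k V_jk, c_jk]] for all j ≠ k; i.e., the corresponding Gaussian state is not GLU-equivalent to any graph state. -/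
open Matrix

theorem Matrix.det_mul_mul_transpose_of_det_eq_one_s3 {n R : Type*} [Fintype n] [DecidableEq n]
    [CommRing R] {S T : Matrix n n R} (hS : S.det = 1) (hT : T.det = 1) (M : Matrix n n R) :
    (S * M * Tᵀ).det = M.det := by
  rw [det_mul, det_mul, det_transpose, hS, hT, one_mul, mul_one]

theorem Matrix.det_fin_two_of_zero_nonpos {R : Type*} [CommRing R] [LinearOrder R]
    [IsStrictOrderedRing R] {a b : R} (ha : 0 ≤ a) (hb : 0 ≤ b) (v c : R) :
    (!![0, a * v; b * v, c]).det ≤ 0 := by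
  have : 0 ≤ a * b * (v * v) := mul_nonneg (mul_nonneg ha hb) (mul_self_nonneg v)
  rw [det_fin_two_of]
  linear_combination this

/-- sufficient criterion for irreducible hidden entanglement: if some
off-diagonal mode-ordered block `σ_{j₀k₀}` of `Σ` has positive determinant, then there
exist no GLUs `S_j` (real 2×2 matrices of determinant 1), positive reals `λ_j`, symmetric
`V`, and reals `c_jk` bringing all blocks to the graph-state form
`S_j σ_jk S_kᵀ = [[0, λ_j V_jk],[λ_k V_jk, c_jk]]`; i.e. the state is not
GLU-equivalent to any graph state. -/
theorem not_GLU_equiv_graphState_of_det_pos {N : ℕ}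
    (Sig : Matrix (Fin N ⊕ Fin N) (Fin N ⊕ Fin N) ℝ)
    (j₀ k₀ : Fin N) (hjk : j₀ ≠ k₀)
    (hpos : 0 < (modeBlock Sig j₀ k₀).det) :
    ¬ ∃ (S : Fin N → Matrix (Fin 2) (Fin 2) ℝ) (lam : Fin N → ℝ)
        (V : Matrix (Fin N) (Fin N) ℝ) (c : Fin N → Fin N → ℝ),
        (∀ j, (S j).det = 1) ∧ (∀ j, 0 < lam j) ∧ V.IsSymm ∧
        (∀ j k, j ≠ k →
          S j * modeBlock Sig j k * (S k)ᵀ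
            = !![0, lam j * V j k; lam k * V j k, c j k]) := by
  rintro ⟨S, lam, V, c, hS, hlam, -, h⟩
  have hdet := det_mul_mul_transpose_of_det_eq_one_s3 (hS j₀) (hS k₀) (modeBlock Sig j₀ k₀)
  rw [h j₀ k₀ hjk] at hdet
  have hnonpos := det_fin_two_of_zero_nonpos (hlam j₀).le (hlam k₀).le (V j₀ k₀) (c j₀ k₀)
  linarith
end

section
/- Symplectic eigenvalues of the partially transposed beamsplitter state: let r₁, r₂ ∈ ℝ, let Σ_B = B₄ Σ_in B₄ᵀ be the covariance matrix of the state obtained by interfering two phase-squeezed vacua of parameters r₁, r₂ on a balanced beamsplitter, let Λ = diag(1,1,1,−1) be the partial-transposition reflection, Σ̃ = Λ Σ_B Λ, and Ω = [[0, I₂],[−I₂, 0]]. Then the characteristic polynomial of Σ̃·Ω is det(X·I₄ − Σ̃Ω) = (X² + (1/4)e^{2(r₁−r₂)})·(X² + (1/4)e^{−2(r₁−r₂)}); hence the symplectic eigenvalues of Σ̃ are (1/2)e^{±(r₁−r₂)}. -/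
open Matrix Polynomial

/-- Covariance matrix of two independent phase-squeezed vacua of parameters `r₁, r₂`,
in the quadrature ordering `(Q₁,Q₂,P₁,P₂)`:
`Σ_in = (1/2)·diag(e^{2r₁}, e^{2r₂}, e^{−2r₁}, e^{−2r₂})`. -/
noncomputable def sigmaIn (r₁ r₂ : ℝ) : Matrix (Fin 4) (Fin 4) ℝ :=
  (1 / 2 : ℝ) • Matrix.diagonal
    ![Real.exp (2 * r₁), Real.exp (2 * r₂), Real.exp (-(2 * r₁)), Real.exp (-(2 * r₂))]

/-- The balanced beamsplitter `B₄ = diag-block(B,B)` with `B = (1/√2)[[1,1],[−1,1]]`. -/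
noncomputable def bs4 : Matrix (Fin 4) (Fin 4) ℝ :=
  (Real.sqrt 2)⁻¹ • !![1, 1, 0, 0; -1, 1, 0, 0; 0, 0, 1, 1; 0, 0, -1, 1]

/-- Partial-transposition reflection `Λ = diag(1,1,1,−1)`. -/
def lamPT : Matrix (Fin 4) (Fin 4) ℝ := Matrix.diagonal ![1, 1, 1, -1]

/-- The symplectic form `Ω = [[0, I₂],[−I₂, 0]]`. -/
def omega4 : Matrix (Fin 4) (Fin 4) ℝ :=
  !![0, 0, 1, 0; 0, 0, 0, 1; -1, 0, 0, 0; 0, -1, 0, 0]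

/-! The reflected covariance matrix `Σ̃` is block diagonal for the splitting `(Q, P)` and `Ω`
swaps the two blocks, so `Σ̃Ω = [[0, A], [B, 0]]` with `2 × 2` blocks. Since `X` commutes with
everything, `det (X - [[0, A], [B, 0]]) = det (X² - A B)`: the characteristic polynomial of
`Σ̃Ω` is that of `A B` evaluated at `X²`. For the beamsplitter state `A B` has trace
`-(e^{2(r₁-r₂)} + e^{-2(r₁-r₂)}) / 4` and determinant `1 / 16`. -/

namespace Matrix

variable {n R : Type*} [Fintype n] [DecidableEq n] [CommRing R]

theorem expand_charpoly (k : ℕ) (M : Matrix n n R) :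
    expand R k M.charpoly = (scalar n (X ^ k) - M.map C).det := by
  rw [charpoly, AlgHom.map_det]
  congr 1
  ext i j
  by_cases h : i = j
  · subst h
    simp
  · simp [h]

theorem charpoly_fromBlocks_zero₁₁_zero₂₂ (A B : Matrix n n R) :
    (fromBlocks 0 A B 0).charpoly = expand R 2 (A * B).charpoly := by
  have hX (M : Matrix n n R[X]) : scalar n X * M = M * scalar n X :=
    (scalar_commute _ (Commute.all _) M).eq
  have hprod : charmatrix (fromBlocks 0 A B 0) * fromBlocks (scalar n X) (A.map C) 0 (scalar n X) =
      fromBlocks (scalar n (X ^ 2)) 0 (-(B.map C * scalar n X))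
        (scalar n (X ^ 2) - (B * A).map C) := by
    rw [charmatrix_fromBlocks, charmatrix_zero, fromBlocks_multiply, pow_two, map_mul]
    simp only [mul_zero, add_zero, zero_mul, neg_mul, hX, add_neg_cancel, Matrix.map_mul,
      neg_add_eq_sub]
  have hdet := congrArg det hprod
  rw [det_mul, det_fromBlocks_zero₂₁, det_fromBlocks_zero₁₂, ← expand_charpoly,
    charpoly_mul_comm] at hdet
  simp only [scalar_apply, det_diagonal, Finset.prod_const, Finset.card_univ] at hdet
  rw [← mul_pow, ← sq, mul_comm, ← pow_mul] at hdet
  exact (isRegular_X_pow _).left.eq_iff.mp hdet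

theorem charpoly_fin_four_antidiagonal_blocks (a₁ a₂ a₃ a₄ b₁ b₂ b₃ b₄ : R) :
    (!![0, 0, a₁, a₂; 0, 0, a₃, a₄; b₁, b₂, 0, 0; b₃, b₄, 0, 0]).charpoly =
      expand R 2 (!![a₁, a₂; a₃, a₄] * !![b₁, b₂; b₃, b₄]).charpoly := by
  rw [← charpoly_fromBlocks_zero₁₁_zero₂₂, ← charpoly_reindex finSumFinEquiv]
  congr 1
  ext i j
  fin_cases i <;> fin_cases j <;> rfl

theorem charpoly_fin_two_eq_mul [Nontrivial R] {M : Matrix (Fin 2) (Fin 2) R} {α β : R}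
    (htrace : M.trace = -(α + β)) (hdet : M.det = α * β) :
    M.charpoly = (X + C α) * (X + C β) := by
  rw [charpoly_fin_two, htrace, hdet]
  simp only [map_neg, map_add, map_mul]
  ring

end Matrix

theorem partialTranspose_beamsplitter_mul_omega (a b c d : ℝ) :
    lamPT * (bs4 * ((1 / 2 : ℝ) • diagonal ![a, b, c, d]) * bs4ᵀ) * lamPT * omega4 =
      !![0, 0, (a + b) / 4, (b - a) / 4; 0, 0, (b - a) / 4, (a + b) / 4;
        -(c + d) / 4, (d - c) / 4, 0, 0; (d - c) / 4, -(c + d) / 4, 0, 0] := by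
  have hscalar : (Real.sqrt 2)⁻¹ * (1 / 2 * (Real.sqrt 2)⁻¹) = 4⁻¹ := by
    rw [mul_left_comm, ← mul_inv, Real.mul_self_sqrt zero_le_two]
    norm_num
  simp only [bs4, transpose_smul, smul_mul_assoc, mul_smul_comm, smul_smul, hscalar]
  ext i j
  fin_cases i <;> fin_cases j <;>
    simp [lamPT, omega4, mul_apply, Fin.sum_univ_four, vecMul, dotProduct] <;> ring

theorem charpoly_partialTranspose_beamsplitter_mul_omega (a b c d : ℝ) :
    (lamPT * (bs4 * ((1 / 2 : ℝ) • diagonal ![a, b, c, d]) * bs4ᵀ) * lamPT * omega4).charpoly =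
      (X ^ 2 + C (a * d / 4)) * (X ^ 2 + C (b * c / 4)) := by
  rw [partialTranspose_beamsplitter_mul_omega, charpoly_fin_four_antidiagonal_blocks,
    charpoly_fin_two_eq_mul (α := a * d / 4) (β := b * c / 4)]
  · simp only [map_mul, map_add, expand_X, expand_C]
  · simp only [mul_fin_two, trace_fin_two, of_apply, cons_val', cons_val_zero, cons_val_one]
    ring
  · simp only [mul_fin_two, det_fin_two_of]
    ring

/-- with `Σ_B = B₄ Σ_in B₄ᵀ` and `Σ̃ = Λ Σ_B Λ`, the characteristic
polynomial of `Σ̃·Ω`, i.e. `det(X·I₄ − Σ̃Ω)`, equals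
`(X² + (1/4)e^{2(r₁−r₂)})·(X² + (1/4)e^{−2(r₁−r₂)})`; hence the symplectic eigenvalues of
`Σ̃` are `(1/2)e^{±(r₁−r₂)}`. -/
theorem charpoly_partial_transpose_beamsplitter (r₁ r₂ : ℝ) :
    ((lamPT * (bs4 * sigmaIn r₁ r₂ * bs4ᵀ) * lamPT) * omega4).charpoly
      = (X ^ 2 + C (Real.exp (2 * (r₁ - r₂)) / 4)) *
        (X ^ 2 + C (Real.exp (-(2 * (r₁ - r₂))) / 4)) := by
  rw [sigmaIn, charpoly_partialTranspose_beamsplitter_mul_omega, ← Real.exp_add, ← Real.exp_add]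
  ring_nf
end

section
/- Entanglement of the beamsplitter output state (Simon PPT criterion): with r₁, r₂ ∈ ℝ, Σ_B = B₄ Σ_in B₄ᵀ, Λ = diag(1,1,1,−1), Σ̃ = Λ Σ_B Λ, and Ω = [[0, I₂],[−I₂, 0]], the complex Hermitian matrix Σ̃ + (i/2)·Ω is positive semidefinite if and only if r₁ = r₂. In particular, the state |B(0,r₁,r₂)⟩ is separable (a product state) if and only if r₁ = r₂, and is entangled whenever r₁ ≠ r₂, even though all edges of its complex graph vanish as r₁, r₂ → ∞. -/
open Matrix
open scoped ComplexOrder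

set_option maxHeartbeats 1000000 in
lemma real_eq (r₁ r₂ : ℝ) :
    lamPT * (bs4 * sigmaIn r₁ r₂ * bs4ᵀ) * lamPT =
    !![(Real.exp (2*r₁)+Real.exp (2*r₂))/4, (Real.exp (2*r₂)-Real.exp (2*r₁))/4, 0, 0;
       (Real.exp (2*r₂)-Real.exp (2*r₁))/4, (Real.exp (2*r₁)+Real.exp (2*r₂))/4, 0, 0;
       0, 0, (Real.exp (-(2*r₁))+Real.exp (-(2*r₂)))/4, (Real.exp (-(2*r₁))-Real.exp (-(2*r₂)))/4;
       0, 0, (Real.exp (-(2*r₁))-Real.exp (-(2*r₂)))/4, (Real.exp (-(2*r₁))+Real.exp (-(2*r₂)))/4] := by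
  have h2 : (Real.sqrt 2)⁻¹ * (Real.sqrt 2)⁻¹ = 1/2 := by
    rw [← mul_inv, Real.mul_self_sqrt (by norm_num)]; norm_num
  have hl : lamPT = !![1,0,0,0; 0,1,0,0; 0,0,1,0; 0,0,0,-1] := by
    ext i j; fin_cases i <;> fin_cases j <;> simp [lamPT, Matrix.diagonal, Matrix.vecHead, Matrix.vecTail]
  have hs : sigmaIn r₁ r₂ = !![Real.exp (2*r₁)/2,0,0,0; 0,Real.exp (2*r₂)/2,0,0;
      0,0,Real.exp (-(2*r₁))/2,0; 0,0,0,Real.exp (-(2*r₂))/2] := by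
    ext i j; fin_cases i <;> fin_cases j <;>
      simp [sigmaIn, Matrix.diagonal, Matrix.vecHead, Matrix.vecTail] <;> ring
  have hct : (!![1, 1, 0, 0; -1, 1, 0, 0; 0, 0, 1, 1; 0, 0, -1, 1] : Matrix (Fin 4) (Fin 4) ℝ)ᵀ =
      !![1, -1, 0, 0; 1, 1, 0, 0; 0, 0, 1, -1; 0, 0, 1, 1] := by
    ext i j; fin_cases i <;> fin_cases j <;> simp [Matrix.vecHead, Matrix.vecTail]
  rw [hl, hs, bs4, Matrix.transpose_smul, hct]
  simp only [Matrix.smul_mul, Matrix.mul_smul, smul_smul]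
  rw [h2]
  ext i j
  fin_cases i <;> fin_cases j <;>
    · simp [Matrix.mul_apply, Fin.sum_univ_four, Matrix.smul_apply, Matrix.vecHead, Matrix.vecTail]
      try ring

noncomputable def Mc (r₁ r₂ : ℝ) : Matrix (Fin 4) (Fin 4) ℂ :=
  let a : ℂ := Real.exp (2*r₁); let b : ℂ := Real.exp (2*r₂)
  let a' : ℂ := Real.exp (-(2*r₁)); let b' : ℂ := Real.exp (-(2*r₂))
  !![(a+b)/4, (b-a)/4, Complex.I/2, 0;
     (b-a)/4, (a+b)/4, 0, Complex.I/2;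
     -(Complex.I/2), 0, (a'+b')/4, (a'-b')/4;
     0, -(Complex.I/2), (a'-b')/4, (a'+b')/4]

lemma complex_eq (r₁ r₂ : ℝ) :
    (((lamPT * (bs4 * sigmaIn r₁ r₂ * bs4ᵀ) * lamPT).map (Complex.ofReal ·)) +
        (Complex.I / 2) • (omega4.map (Complex.ofReal ·))) = Mc r₁ r₂ := by
  rw [real_eq]
  ext i j
  fin_cases i <;> fin_cases j <;>
    · simp [Mc, omega4, Matrix.map_apply, Matrix.vecHead, Matrix.vecTail]
      try push_cast
      try ring

lemma qform1 (r₁ r₂ : ℝ) :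
    star ![1, -1, Complex.I * Real.exp (2*r₂), -(Complex.I * Real.exp (2*r₂))] ⬝ᵥ
      (Mc r₁ r₂ *ᵥ ![1, -1, Complex.I * Real.exp (2*r₂), -(Complex.I * Real.exp (2*r₂))])
    = ((Real.exp (2*r₁) - Real.exp (2*r₂) : ℝ) : ℂ) := by
  simp [Mc, dotProduct, Matrix.mulVec, Fin.sum_univ_four, Matrix.vecHead,
    Matrix.vecTail, Real.exp_neg, _root_.map_mul, Complex.conj_I, Complex.conj_ofReal]
  have hne : (Real.exp (2*r₂) : ℂ) ≠ 0 := Complex.ofReal_ne_zero.mpr (Real.exp_ne_zero _)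
  field_simp
  ring_nf
  simp [Complex.I_sq]

lemma qform2 (r₁ r₂ : ℝ) :
    star ![1, 1, Complex.I * Real.exp (2*r₁), Complex.I * Real.exp (2*r₁)] ⬝ᵥ
      (Mc r₁ r₂ *ᵥ ![1, 1, Complex.I * Real.exp (2*r₁), Complex.I * Real.exp (2*r₁)])
    = ((Real.exp (2*r₂) - Real.exp (2*r₁) : ℝ) : ℂ) := by
  simp [Mc, dotProduct, Matrix.mulVec, Fin.sum_univ_four, Matrix.vecHead,
    Matrix.vecTail, Real.exp_neg, _root_.map_mul, Complex.conj_I, Complex.conj_ofReal]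
  have hne : (Real.exp (2*r₁) : ℂ) ≠ 0 := Complex.ofReal_ne_zero.mpr (Real.exp_ne_zero _)
  field_simp
  ring_nf
  try simp [Complex.I_sq]
  try ring

set_option maxHeartbeats 4000000 in
lemma Mc_psd (r : ℝ) : (Mc r r).PosSemidef := by
  set c : ℝ := Real.sqrt (Real.exp (2*r)/2) with hc_def
  set d : ℝ := Real.sqrt (Real.exp (-(2*r))/2) with hd_def
  have hc : c * c = Real.exp (2*r)/2 :=
    Real.mul_self_sqrt (by positivity)
  have hd : d * d = Real.exp (-(2*r))/2 :=
    Real.mul_self_sqrt (by positivity)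
  have hcd : c * d = 1/2 := by
    rw [hc_def, hd_def, ← Real.sqrt_mul (by positivity)]
    have : Real.exp (2*r)/2 * (Real.exp (-(2*r))/2) = 1/4 := by
      rw [div_mul_div_comm, ← Real.exp_add]
      norm_num
    rw [this, show (1:ℝ)/4 = (1/2)^2 by norm_num, Real.sqrt_sq (by norm_num)]
  have hcC : (c:ℂ) * c = (Real.exp (2*r) : ℂ)/2 := by
    rw [← Complex.ofReal_mul, hc]; push_cast; ring
  have hdC : (d:ℂ) * d = (Real.exp (-(2*r)) : ℂ)/2 := by
    rw [← Complex.ofReal_mul, hd]; push_cast; ring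
  have hcdC : (c:ℂ) * d = 1/2 := by
    rw [← Complex.ofReal_mul, hcd]; push_cast; ring
  push_cast at hcC hdC hcdC
  have key : Mc r r =
      (!![(c:ℂ), 0, Complex.I*(d:ℂ), 0; 0, (c:ℂ), 0, Complex.I*(d:ℂ)] : Matrix (Fin 2) (Fin 4) ℂ)ᴴ *
      !![(c:ℂ), 0, Complex.I*(d:ℂ), 0; 0, (c:ℂ), 0, Complex.I*(d:ℂ)] := by
    ext i j
    fin_cases i <;> fin_cases j <;>
      · simp [Mc, Matrix.mul_apply, Fin.sum_univ_two, Matrix.conjTranspose_apply,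
          Matrix.vecHead, Matrix.vecTail, Complex.conj_I, Complex.conj_ofReal]
        try first
        | rfl
        | linear_combination hcC
        | linear_combination hdC
        | linear_combination -hcC - 2*hcdC
        | linear_combination -hdC
        | linear_combination (d:ℂ)^2 * Complex.I_sq
        | linear_combination (c:ℂ)^2 * Complex.I_sq
        | linear_combination -((d:ℂ)^2) * Complex.I_sq
        | linear_combination -((c:ℂ)^2) * Complex.I_sq
        | linear_combination (c:ℂ)^2*Complex.I_sq + hcC
        | linear_combination (c:ℂ)^2*Complex.I_sq + hdC
        | linear_combination (c:ℂ)^2*Complex.I_sq - hcC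
        | linear_combination (c:ℂ)^2*Complex.I_sq - hdC
        | linear_combination (d:ℂ)^2*Complex.I_sq + hcC
        | linear_combination (d:ℂ)^2*Complex.I_sq + hdC
        | linear_combination (d:ℂ)^2*Complex.I_sq - hcC
        | linear_combination (d:ℂ)^2*Complex.I_sq - hdC
        | linear_combination (((c:ℂ)^2+(d:ℂ)^2) * Complex.I_sq) - hcC
        | linear_combination (((c:ℂ)^2+(d:ℂ)^2) * Complex.I_sq) + hcC
        | linear_combination (((c:ℂ)^2+(d:ℂ)^2) * Complex.I_sq) - hdC
        | linear_combination (((c:ℂ)^2+(d:ℂ)^2) * Complex.I_sq) + hdC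
        | linear_combination -(((c:ℂ)^2+(d:ℂ)^2) * Complex.I_sq) - hcC
        | linear_combination -(((c:ℂ)^2+(d:ℂ)^2) * Complex.I_sq) + hcC
        | linear_combination -(((c:ℂ)^2+(d:ℂ)^2) * Complex.I_sq) - hdC
        | linear_combination -(((c:ℂ)^2+(d:ℂ)^2) * Complex.I_sq) + hdC - 2*hcdC
        | linear_combination -hcC + 2*hcdC
        | linear_combination -hdC
        | linear_combination (d:ℂ)^2 * Complex.I_sq
        | linear_combination (c:ℂ)^2 * Complex.I_sq
        | linear_combination -((d:ℂ)^2) * Complex.I_sq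
        | linear_combination -((c:ℂ)^2) * Complex.I_sq
        | linear_combination (c:ℂ)^2*Complex.I_sq + hcC
        | linear_combination (c:ℂ)^2*Complex.I_sq + hdC
        | linear_combination (c:ℂ)^2*Complex.I_sq - hcC
        | linear_combination (c:ℂ)^2*Complex.I_sq - hdC
        | linear_combination (d:ℂ)^2*Complex.I_sq + hcC
        | linear_combination (d:ℂ)^2*Complex.I_sq + hdC
        | linear_combination (d:ℂ)^2*Complex.I_sq - hcC
        | linear_combination (d:ℂ)^2*Complex.I_sq - hdC
        | linear_combination (((c:ℂ)^2+(d:ℂ)^2) * Complex.I_sq) - hcC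
        | linear_combination (((c:ℂ)^2+(d:ℂ)^2) * Complex.I_sq) + hcC
        | linear_combination (((c:ℂ)^2+(d:ℂ)^2) * Complex.I_sq) - hdC
        | linear_combination (((c:ℂ)^2+(d:ℂ)^2) * Complex.I_sq) + hdC
        | linear_combination -(((c:ℂ)^2+(d:ℂ)^2) * Complex.I_sq) - hcC
        | linear_combination -(((c:ℂ)^2+(d:ℂ)^2) * Complex.I_sq) + hcC
        | linear_combination -(((c:ℂ)^2+(d:ℂ)^2) * Complex.I_sq) - hdC
        | linear_combination -(((c:ℂ)^2+(d:ℂ)^2) * Complex.I_sq) + hdC + 2*hcdC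
        | linear_combination hcC + 2*hcdC
        | linear_combination hdC + 2*hcdC
        | linear_combination hcC - 2*hcdC
        | linear_combination hdC - 2*hcdC
        | linear_combination Complex.I * hcdC
        | linear_combination -(Complex.I * hcdC)
        | linear_combination (2:ℂ) * hcdC
        | linear_combination (2:ℂ) * Complex.I * hcdC
        | linear_combination -((2:ℂ) * Complex.I * hcdC)
        | linear_combination -hcC + 2*Complex.I*hcdC
        | linear_combination -hcC - 2*Complex.I*hcdC
        | linear_combination -hdC
        | linear_combination (d:ℂ)^2 * Complex.I_sq
        | linear_combination (c:ℂ)^2 * Complex.I_sq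
        | linear_combination -((d:ℂ)^2) * Complex.I_sq
        | linear_combination -((c:ℂ)^2) * Complex.I_sq
        | linear_combination (c:ℂ)^2*Complex.I_sq + hcC
        | linear_combination (c:ℂ)^2*Complex.I_sq + hdC
        | linear_combination (c:ℂ)^2*Complex.I_sq - hcC
        | linear_combination (c:ℂ)^2*Complex.I_sq - hdC
        | linear_combination (d:ℂ)^2*Complex.I_sq + hcC
        | linear_combination (d:ℂ)^2*Complex.I_sq + hdC
        | linear_combination (d:ℂ)^2*Complex.I_sq - hcC
        | linear_combination (d:ℂ)^2*Complex.I_sq - hdC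
        | linear_combination (((c:ℂ)^2+(d:ℂ)^2) * Complex.I_sq) - hcC
        | linear_combination (((c:ℂ)^2+(d:ℂ)^2) * Complex.I_sq) + hcC
        | linear_combination (((c:ℂ)^2+(d:ℂ)^2) * Complex.I_sq) - hdC
        | linear_combination (((c:ℂ)^2+(d:ℂ)^2) * Complex.I_sq) + hdC
        | linear_combination -(((c:ℂ)^2+(d:ℂ)^2) * Complex.I_sq) - hcC
        | linear_combination -(((c:ℂ)^2+(d:ℂ)^2) * Complex.I_sq) + hcC
        | linear_combination -(((c:ℂ)^2+(d:ℂ)^2) * Complex.I_sq) - hdC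
        | linear_combination -(((c:ℂ)^2+(d:ℂ)^2) * Complex.I_sq) + hdC + 2*Complex.I*hcdC
        | linear_combination -hdC
        | linear_combination (d:ℂ)^2 * Complex.I_sq
        | linear_combination (c:ℂ)^2 * Complex.I_sq
        | linear_combination -((d:ℂ)^2) * Complex.I_sq
        | linear_combination -((c:ℂ)^2) * Complex.I_sq
        | linear_combination (c:ℂ)^2*Complex.I_sq + hcC
        | linear_combination (c:ℂ)^2*Complex.I_sq + hdC
        | linear_combination (c:ℂ)^2*Complex.I_sq - hcC
        | linear_combination (c:ℂ)^2*Complex.I_sq - hdC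
        | linear_combination (d:ℂ)^2*Complex.I_sq + hcC
        | linear_combination (d:ℂ)^2*Complex.I_sq + hdC
        | linear_combination (d:ℂ)^2*Complex.I_sq - hcC
        | linear_combination (d:ℂ)^2*Complex.I_sq - hdC
        | linear_combination (((c:ℂ)^2+(d:ℂ)^2) * Complex.I_sq) - hcC
        | linear_combination (((c:ℂ)^2+(d:ℂ)^2) * Complex.I_sq) + hcC
        | linear_combination (((c:ℂ)^2+(d:ℂ)^2) * Complex.I_sq) - hdC
        | linear_combination (((c:ℂ)^2+(d:ℂ)^2) * Complex.I_sq) + hdC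
        | linear_combination -(((c:ℂ)^2+(d:ℂ)^2) * Complex.I_sq) - hcC
        | linear_combination -(((c:ℂ)^2+(d:ℂ)^2) * Complex.I_sq) + hcC
        | linear_combination -(((c:ℂ)^2+(d:ℂ)^2) * Complex.I_sq) - hdC
        | linear_combination -(((c:ℂ)^2+(d:ℂ)^2) * Complex.I_sq) + hdC - 2*Complex.I*hcdC
        | linear_combination hcC + 2*Complex.I*hcdC
        | linear_combination hcC - 2*Complex.I*hcdC
        | linear_combination hdC + 2*Complex.I*hcdC
        | linear_combination hdC - 2*Complex.I*hcdC
        | linear_combination -hcC - hdC + 2*Complex.I*hcdC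
        | linear_combination -hcC - hdC - 2*Complex.I*hcdC
        | linear_combination hcC + hdC + 2*Complex.I*hcdC
        | linear_combination hcC + hdC - 2*Complex.I*hcdC
        | linear_combination -hcC - hdC + 2*hcdC
        | linear_combination -hcC - hdC - 2*hcdC
        | linear_combination hcC - hdC
        | linear_combination hdC - hcC
        | linear_combination -hcC
        | linear_combination -hdC
        | linear_combination (d:ℂ)^2 * Complex.I_sq
        | linear_combination (c:ℂ)^2 * Complex.I_sq
        | linear_combination -((d:ℂ)^2) * Complex.I_sq
        | linear_combination -((c:ℂ)^2) * Complex.I_sq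
        | linear_combination (c:ℂ)^2*Complex.I_sq + hcC
        | linear_combination (c:ℂ)^2*Complex.I_sq + hdC
        | linear_combination (c:ℂ)^2*Complex.I_sq - hcC
        | linear_combination (c:ℂ)^2*Complex.I_sq - hdC
        | linear_combination (d:ℂ)^2*Complex.I_sq + hcC
        | linear_combination (d:ℂ)^2*Complex.I_sq + hdC
        | linear_combination (d:ℂ)^2*Complex.I_sq - hcC
        | linear_combination (d:ℂ)^2*Complex.I_sq - hdC
        | linear_combination (((c:ℂ)^2+(d:ℂ)^2) * Complex.I_sq) - hcC
        | linear_combination (((c:ℂ)^2+(d:ℂ)^2) * Complex.I_sq) + hcC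
        | linear_combination (((c:ℂ)^2+(d:ℂ)^2) * Complex.I_sq) - hdC
        | linear_combination (((c:ℂ)^2+(d:ℂ)^2) * Complex.I_sq) + hdC
        | linear_combination -(((c:ℂ)^2+(d:ℂ)^2) * Complex.I_sq) - hcC
        | linear_combination -(((c:ℂ)^2+(d:ℂ)^2) * Complex.I_sq) + hcC
        | linear_combination -(((c:ℂ)^2+(d:ℂ)^2) * Complex.I_sq) - hdC
        | linear_combination -(((c:ℂ)^2+(d:ℂ)^2) * Complex.I_sq) + hdC
  rw [key]
  exact Matrix.posSemidef_conjTranspose_mul_self _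

/-- Simon PPT criterion for the beamsplitter output state: with
`Σ_B = B₄ Σ_in B₄ᵀ`, `Σ̃ = Λ Σ_B Λ`, the complex Hermitian matrix `Σ̃ + (i/2)·Ω` is
positive semidefinite if and only if `r₁ = r₂`; i.e. the state `|B(0,r₁,r₂)⟩` is
separable iff `r₁ = r₂` and entangled whenever `r₁ ≠ r₂`. -/
theorem beamsplitter_PPT_iff (r₁ r₂ : ℝ) :
    (((lamPT * (bs4 * sigmaIn r₁ r₂ * bs4ᵀ) * lamPT).map (Complex.ofReal ·)) +
        (Complex.I / 2) • (omega4.map (Complex.ofReal ·))).PosSemidef ↔ r₁ = r₂ := by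
  rw [complex_eq]
  constructor
  · intro h
    have h1 := h.dotProduct_mulVec_nonneg ![1, -1, Complex.I * Real.exp (2*r₂), -(Complex.I * Real.exp (2*r₂))]
    have h2 := h.dotProduct_mulVec_nonneg ![1, 1, Complex.I * Real.exp (2*r₁), Complex.I * Real.exp (2*r₁)]
    rw [qform1] at h1
    rw [qform2] at h2
    rw [Complex.zero_le_real] at h1 h2
    have : Real.exp (2*r₁) = Real.exp (2*r₂) := by linarith
    have := Real.exp_injective this
    linarith
  · rintro rfl
    exact Mc_psd r₁
end

section
/- Revealing hidden entanglement by local squeezing: let r₁, r₂ ∈ ℝ, r₊ = (r₁+r₂)/2, d = r₁ − r₂, and let L = diag(e^{−r₊}, e^{−r₊}, e^{r₊}, e^{r₊}) be the local (single-mode) squeezing GLU applied to both modes. Then L · (B₄ Σ_in B₄ᵀ) · Lᵀ = (1/2)·[[cosh d, −sinh d, 0, 0],[−sinh d, cosh d, 0, 0],[0, 0, cosh d, sinh d],[0, 0, sinh d, cosh d]], which is exactly the covariance matrix of a two-mode squeezed (EPR) state with squeezing parameter r₋ = (r₁−r₂)/2. -/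
open Matrix

/-- The local (single-mode) squeezing GLU `L = diag(e^{−r₊}, e^{−r₊}, e^{r₊}, e^{r₊})`
applied to both modes, with `r₊ = (r₁+r₂)/2`. -/
noncomputable def localSqueeze (rp : ℝ) : Matrix (Fin 4) (Fin 4) ℝ :=
  Matrix.diagonal ![Real.exp (-rp), Real.exp (-rp), Real.exp rp, Real.exp rp]

/-!
The local squeezing `L` is scalar on the `Q`-block and on the `P`-block, so it commutes with the
block-diagonal beamsplitter and can be moved onto the input state. There it shifts both squeezing
parameters by `-r₊`, leaving two vacua squeezed by `±r₋` in opposite directions; a balanced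
beamsplitter turns exactly such a pair into the two-mode squeezed state of parameter `r₋`.
-/

open Real

/-- Covariance matrix of the two-mode squeezed (EPR) vacuum with squeezing parameter `d / 2`. -/
noncomputable def eprCovariance (d : ℝ) : Matrix (Fin 4) (Fin 4) ℝ :=
  (1 / 2 : ℝ) •
    !![cosh d, -sinh d, 0, 0;
       -sinh d, cosh d, 0, 0;
       0, 0, cosh d, sinh d;
       0, 0, sinh d, cosh d]

theorem Commute.mul_mul_transpose_swap {n R : Type*} [Fintype n] [CommSemiring R]
    {L B : Matrix n n R} (h : Commute L B) (S : Matrix n n R) :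
    L * (B * S * Bᵀ) * Lᵀ = B * (L * S * Lᵀ) * Bᵀ := by
  have hT : Bᵀ * Lᵀ = Lᵀ * Bᵀ := by rw [← transpose_mul, h.eq, transpose_mul]
  simp only [← Matrix.mul_assoc, h.eq]
  simp only [Matrix.mul_assoc, hT]

theorem transpose_localSqueeze (rp : ℝ) : (localSqueeze rp)ᵀ = localSqueeze rp :=
  diagonal_transpose _

theorem commute_localSqueeze_bs4 (rp : ℝ) : Commute (localSqueeze rp) bs4 := by
  unfold Commute SemiconjBy localSqueeze bs4
  rw [Matrix.mul_smul, Matrix.smul_mul]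
  congr 1
  ext i j
  fin_cases i <;> fin_cases j <;> simp

theorem localSqueeze_mul_sigmaIn_mul_transpose (rp r₁ r₂ : ℝ) :
    localSqueeze rp * sigmaIn r₁ r₂ * (localSqueeze rp)ᵀ = sigmaIn (r₁ - rp) (r₂ - rp) := by
  rw [transpose_localSqueeze, localSqueeze, sigmaIn, sigmaIn, Matrix.mul_smul, Matrix.smul_mul,
    diagonal_mul_diagonal, diagonal_mul_diagonal]
  congr 2
  ext i
  fin_cases i <;> simp [← exp_add] <;> ring

theorem bs4_mul_sigmaIn_neg_mul_transpose (r : ℝ) :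
    bs4 * sigmaIn r (-r) * bs4ᵀ = eprCovariance (2 * r) := by
  have hsqrt : (√2)⁻¹ * (√2)⁻¹ = (1 / 2 : ℝ) := by
    rw [← mul_inv, mul_self_sqrt zero_le_two, one_div]
  simp only [bs4, sigmaIn, eprCovariance, transpose_smul, Matrix.smul_mul, Matrix.mul_smul,
    smul_smul]
  rw [show (√2)⁻¹ * (1 / 2 * (√2)⁻¹) = (1 / 2 : ℝ) * (1 / 2) by rw [mul_left_comm, hsqrt],
    ← smul_smul]
  congr 1
  ext i j
  fin_cases i <;> fin_cases j <;>
    simp [vecMul, dotProduct, mul_apply, Fin.sum_univ_four, cosh_eq, sinh_eq] <;> ring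

/-- revealing hidden entanglement by local squeezing: with
`r₊ = (r₁+r₂)/2` and `d = r₁ − r₂`,
`L · (B₄ Σ_in B₄ᵀ) · Lᵀ` equals the covariance matrix of a two-mode squeezed (EPR)
state with squeezing parameter `r₋ = (r₁−r₂)/2`. -/
theorem local_squeezing_reveals_EPR (r₁ r₂ : ℝ) :
    localSqueeze ((r₁ + r₂) / 2) * (bs4 * sigmaIn r₁ r₂ * bs4ᵀ) *
        (localSqueeze ((r₁ + r₂) / 2))ᵀ
      = (1 / 2 : ℝ) •
          !![Real.cosh (r₁ - r₂), -Real.sinh (r₁ - r₂), 0, 0;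
             -Real.sinh (r₁ - r₂), Real.cosh (r₁ - r₂), 0, 0;
             0, 0, Real.cosh (r₁ - r₂), Real.sinh (r₁ - r₂);
             0, 0, Real.sinh (r₁ - r₂), Real.cosh (r₁ - r₂)] := by
  have hsqueezed : localSqueeze ((r₁ + r₂) / 2) * sigmaIn r₁ r₂ * (localSqueeze ((r₁ + r₂) / 2))ᵀ
      = sigmaIn ((r₁ - r₂) / 2) (-((r₁ - r₂) / 2)) := by
    rw [localSqueeze_mul_sigmaIn_mul_transpose]
    congr 1 <;> ring
  rw [(commute_localSqueeze_bs4 _).mul_mul_transpose_swap, hsqueezed,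
    bs4_mul_sigmaIn_neg_mul_transpose, mul_div_cancel₀ _ two_ne_zero]
  rfl
end

section
/- Standard form by a left GLU (negative-determinant case): let M = [[A,B],[C,D]] be a real 2×2 matrix with det M < 0 and set δ = √(−det M) = √(BC − AD). Then A² + C² > 0, and the symplectic matrix S_left = [[r, 0],[0, r⁻¹]] · [[cos φ, −sin φ],[sin φ, cos φ]] with cos φ = C/√(A²+C²), sin φ = A/√(A²+C²), and r = √(A²+C²)/δ satisfies S_left · M = [[0, δ],[δ, δ·(AB + CD)/(A²+C²)]]. -/
set_option maxHeartbeats 1000000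

open Matrix

/-- standard form by a left GLU, negative-determinant case: let
`M = [[A,B],[C,D]]` with `det M < 0`, `δ = √(BC − AD)`. Then `A² + C² > 0` and the
symplectic matrix `S_left = [[r,0],[0,r⁻¹]]·[[cos φ, −sin φ],[sin φ, cos φ]]` with
`cos φ = C/√(A²+C²)`, `sin φ = A/√(A²+C²)`, `r = √(A²+C²)/δ` satisfies
`S_left · M = [[0, δ],[δ, δ(AB+CD)/(A²+C²)]]`. -/
theorem left_GLU_standard_form (A B C D : ℝ)
    (hdet : (!![A, B; C, D] : Matrix (Fin 2) (Fin 2) ℝ).det < 0) :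
    0 < A ^ 2 + C ^ 2 ∧
    ∃ φ : ℝ, Real.cos φ = C / Real.sqrt (A ^ 2 + C ^ 2) ∧
      Real.sin φ = A / Real.sqrt (A ^ 2 + C ^ 2) ∧
      (!![Real.sqrt (A ^ 2 + C ^ 2) / Real.sqrt (B * C - A * D), 0;
          0, (Real.sqrt (A ^ 2 + C ^ 2) / Real.sqrt (B * C - A * D))⁻¹] *
        !![Real.cos φ, -Real.sin φ; Real.sin φ, Real.cos φ]) * !![A, B; C, D]
      = !![0, Real.sqrt (B * C - A * D);
           Real.sqrt (B * C - A * D),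
             Real.sqrt (B * C - A * D) * (A * B + C * D) / (A ^ 2 + C ^ 2)] := by
  rw [Matrix.det_fin_two_of] at hdet
  have hbc : 0 < B * C - A * D := by linarith
  have hAC : 0 < A ^ 2 + C ^ 2 := by
    rcases eq_or_ne A 0 with hA | hA
    · rcases eq_or_ne C 0 with hC | hC
      · exfalso; rw [hA, hC] at hbc; simp at hbc
      · positivity
    · positivity
  set n := Real.sqrt (A ^ 2 + C ^ 2) with hn
  set δ := Real.sqrt (B * C - A * D) with hδ
  have hn2 : n ^ 2 = A ^ 2 + C ^ 2 := Real.sq_sqrt hAC.le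
  have hδ2 : δ ^ 2 = B * C - A * D := Real.sq_sqrt hbc.le
  have hnpos : 0 < n := Real.sqrt_pos.mpr hAC
  have hδpos : 0 < δ := Real.sqrt_pos.mpr hbc
  clear_value n δ
  refine ⟨hAC, ?_⟩
  have hCn : -1 ≤ C / n ∧ C / n ≤ 1 := by
    constructor
    · rw [le_div_iff₀ hnpos]; nlinarith
    · rw [div_le_one hnpos]; nlinarith
  have hsin : Real.sin (Real.arccos (C / n)) = |A| / n := by
    rw [Real.sin_arccos]
    rw [show (1 : ℝ) - (C / n) ^ 2 = (|A| / n) ^ 2 by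
      rw [div_pow, div_pow, sq_abs]
      field_simp
      nlinarith]
    exact Real.sqrt_sq (by positivity)
  obtain ⟨φ, hcos, hsin⟩ : ∃ φ : ℝ, Real.cos φ = C / n ∧ Real.sin φ = A / n := by
    rcases le_or_gt 0 A with hA | hA
    · exact ⟨Real.arccos (C / n), Real.cos_arccos hCn.1 hCn.2,
        by rw [hsin, abs_of_nonneg hA]⟩
    · exact ⟨-Real.arccos (C / n), by rw [Real.cos_neg]; exact Real.cos_arccos hCn.1 hCn.2,
        by rw [Real.sin_neg, hsin, abs_of_neg hA]; ring⟩
  have hnn : n * n = A ^ 2 + C ^ 2 := by nlinarith [hn2]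
  have hδδ : δ * δ = B * C - A * D := by nlinarith [hδ2]
  refine ⟨φ, hcos, hsin, ?_⟩
  ext i j
  fin_cases i <;> fin_cases j <;>
    simp [Matrix.mul_apply, Fin.sum_univ_two, hcos, hsin] <;>
    field_simp
  all_goals first
    | ring1
    | linear_combination (-n) * hδδ
    | linear_combination (-δ) * hnn
    | linear_combination (-(δ * (A * B + C * D))) * hnn
    | linear_combination (-1 : ℝ) * hδδ
    | linear_combination (-1 : ℝ) * hnn
    | linear_combination (-(A * B + C * D)) * hnn
end

section
/- Three-mode sufficiency theorem: let Σ be a 6×6 real matrix in mode ordering (Q₁,P₁,Q₂,P₂,Q₃,P₃) whose diagonal 2×2 blocks are σ_jj = λ_j·I₂ (λ_j ∈ ℝ) and whose off-diagonal 2×2 blocks are diagonal, σ_jk = diag(α_jk, β_jk) for j < k, with α_jk·β_jk < 0 for all three pairs (j,k) (i.e. det σ_jk < 0 for all j ≠ k). Then there exist real 2×2 matrices S₁, S₂, S₃, each of determinant 1, such that for all j ≠ k the (1,1) entry (the Q_j–Q_k correlation) of S_j · σ_jk · S_kᵀ equals 0. Hence such a three-mode Gaussian state is GLU-equivalent to a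 state with diagonal U, i.e. to a cluster state. -/
open Matrix

lemma entry00_aux (x y p q : ℝ) :
    (!![x, 1; 0, x⁻¹] * !![p, 0; 0, q] * (!![y, 1; 0, y⁻¹])ᵀ) 0 0 = x * p * y + q := by
  simp [Matrix.mul_apply, Fin.sum_univ_two]

/-- three-mode sufficiency: let `Σ` be a symmetric 6×6 real covariance
matrix of three modes whose diagonal blocks are `σ_jj = λ_j·I₂` and whose off-diagonal
blocks are diagonal, `σ_jk = diag(α_jk, β_jk)`, with `α_jk·β_jk < 0` for all pairs
(i.e. `det σ_jk < 0` for all `j ≠ k`). Then there exist GLUs `S₁,S₂,S₃` (real 2×2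
matrices of determinant 1) cancelling the `Q_j–Q_k` correlation, i.e. the (1,1) entry of
`S_j σ_jk S_kᵀ`, for all `j ≠ k`: such a three-mode Gaussian state is GLU-equivalent to
a state with diagonal `U`, i.e. to a cluster state. -/
theorem three_mode_GLU_equiv_cluster
    (Sig : Matrix (Fin 3 ⊕ Fin 3) (Fin 3 ⊕ Fin 3) ℝ) (hsymm : Sig.IsSymm)
    (lam : Fin 3 → ℝ) (α β : Fin 3 → Fin 3 → ℝ)
    (hdiag : ∀ j, modeBlock Sig j j = lam j • (1 : Matrix (Fin 2) (Fin 2) ℝ))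
    (hoff : ∀ j k, j ≠ k → modeBlock Sig j k = !![α j k, 0; 0, β j k])
    (hneg : ∀ j k, j ≠ k → α j k * β j k < 0) :
    ∃ S : Fin 3 → Matrix (Fin 2) (Fin 2) ℝ, (∀ j, (S j).det = 1) ∧
      ∀ j k, j ≠ k → (S j * modeBlock Sig j k * (S k)ᵀ) 0 0 = 0 := by
  -- symmetry of α and β
  have hαsym : ∀ j k : Fin 3, j ≠ k → α k j = α j k := by
    intro j k hjk
    have h1 := hoff j k hjk
    have h2 := hoff k j hjk.symm
    have e1 : modeBlock Sig j k 0 0 = α j k := by rw [h1]; simp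
    have e2 : modeBlock Sig k j 0 0 = α k j := by rw [h2]; simp
    simp only [modeBlock, Matrix.cons_val', Matrix.cons_val_zero, Matrix.empty_val',
      Matrix.cons_val_fin_one, Matrix.of_apply] at e1 e2
    rw [← e1, ← e2, hsymm.apply]
  have hβsym : ∀ j k : Fin 3, j ≠ k → β k j = β j k := by
    intro j k hjk
    have h1 := hoff j k hjk
    have h2 := hoff k j hjk.symm
    have e1 : modeBlock Sig j k 1 1 = β j k := by rw [h1]; simp
    have e2 : modeBlock Sig k j 1 1 = β k j := by rw [h2]; simp
    simp only [modeBlock, Matrix.cons_val', Matrix.cons_val_one, Matrix.head_cons,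
      Matrix.empty_val', Matrix.cons_val_fin_one, Matrix.head_fin_const,
      Matrix.of_apply] at e1 e2
    rw [← e1, ← e2, hsymm.apply]
  have hαne : ∀ j k : Fin 3, j ≠ k → α j k ≠ 0 := by
    intro j k hjk h0
    have := hneg j k hjk
    rw [h0] at this; simp at this
  set r : Fin 3 → Fin 3 → ℝ := fun j k => -(α j k * β j k) / (α j k) ^ 2 with hr
  have hrpos : ∀ j k : Fin 3, j ≠ k → 0 < r j k := by
    intro j k hjk
    exact div_pos (by linarith [hneg j k hjk]) (pow_two_pos_of_ne_zero (hαne j k hjk))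
  have hrsym : ∀ j k : Fin 3, j ≠ k → r k j = r j k := by
    intro j k hjk
    simp only [hr]
    rw [hαsym j k hjk, hβsym j k hjk]
  set a1 : ℝ := Real.sqrt (r 0 1 * r 0 2 / r 1 2) with ha1
  have h01 : (0 : Fin 3) ≠ 1 := by decide
  have h02 : (0 : Fin 3) ≠ 2 := by decide
  have h12 : (1 : Fin 3) ≠ 2 := by decide
  have ha1pos : 0 < a1 := Real.sqrt_pos.mpr
    (div_pos (mul_pos (hrpos 0 1 h01) (hrpos 0 2 h02)) (hrpos 1 2 h12))
  have ha1sq : a1 ^ 2 = r 0 1 * r 0 2 / r 1 2 := by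
    rw [ha1, Real.sq_sqrt (le_of_lt
      (div_pos (mul_pos (hrpos 0 1 h01) (hrpos 0 2 h02)) (hrpos 1 2 h12)))]
  set a : Fin 3 → ℝ := ![a1, r 0 1 / a1, r 0 2 / a1] with ha
  have hapos : ∀ j, 0 < a j := by
    intro j
    fin_cases j <;> simp [ha]
    · exact ha1pos
    · exact div_pos (hrpos 0 1 h01) ha1pos
    · exact div_pos (hrpos 0 2 h02) ha1pos
  have key : ∀ j k : Fin 3, j ≠ k → a j * a k = r j k := by
    have k01 : a 0 * a 1 = r 0 1 := by
      simp only [ha]; simp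
      field_simp
    have k02 : a 0 * a 2 = r 0 2 := by
      simp only [ha]; simp
      field_simp
    have hr01 : r 0 1 ≠ 0 := (hrpos 0 1 h01).ne'
    have hr02 : r 0 2 ≠ 0 := (hrpos 0 2 h02).ne'
    have hr12 : r 1 2 ≠ 0 := (hrpos 1 2 h12).ne'
    have k12 : a 1 * a 2 = r 1 2 := by
      have e : a 1 * a 2 = (r 0 1 * r 0 2) / a1 ^ 2 := by
        simp only [ha]
        simp
        rw [div_mul_div_comm, sq]
      have cancel : ∀ x y : ℝ, x ≠ 0 → y ≠ 0 → x / (x / y) = y := by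
        intro x y hx hy; field_simp
      rw [e, ha1sq]
      exact cancel _ _ (mul_ne_zero hr01 hr02) hr12
    intro j k hjk
    fin_cases j <;> fin_cases k
    all_goals first
      | exact absurd rfl hjk
      | exact k01
      | exact k02
      | exact k12
      | exact (mul_comm (a 1) (a 0)).trans (k01.trans (hrsym 0 1 h01).symm)
      | exact (mul_comm (a 2) (a 0)).trans (k02.trans (hrsym 0 2 h02).symm)
      | exact (mul_comm (a 2) (a 1)).trans (k12.trans (hrsym 1 2 h12).symm)
  refine ⟨fun j => !![a j, 1; 0, (a j)⁻¹], ?_, ?_⟩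
  · intro j
    rw [Matrix.det_fin_two_of]
    have := (hapos j).ne'
    field_simp
    norm_num
  · intro j k hjk
    rw [hoff j k hjk, entry00_aux]
    have hk := key j k hjk
    have hα := hαne j k hjk
    have : a j * α j k * a k + β j k
        = (a j * a k) * α j k + β j k := by ring
    rw [this, hk, hr]
    field_simp
    ring
end

section
/- Rotation lemma for opposite-sign diagonal blocks: let α, β ∈ ℝ with α·β < 0 and D = diag(α, β). Then there exist θ ∈ ℝ and ε ∈ ℝ with ε² = −α·β such that the rotation R(θ) = [[cos θ, sin θ],[−sin θ, cos θ]] satisfies R(θ) · D · R(θ)ᵀ = [[0, ε],[ε, α + β]]; that is, the Q–Q correlation of a diagonal correlation block can be cancelled by a local rotation exactly when the two diagonal entries have opposite signs. -/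
open Matrix

/-- rotation lemma for opposite-sign diagonal blocks: let `α·β < 0` and
`D = diag(α,β)`. Then there exist `θ ∈ ℝ` and `ε` with `ε² = −αβ` such that the local
rotation `R(θ) = [[cos θ, sin θ],[−sin θ, cos θ]]` satisfies
`R(θ)·D·R(θ)ᵀ = [[0, ε],[ε, α+β]]`: the Q–Q correlation of a diagonal correlation block
can be cancelled by a local rotation exactly when the diagonal entries have opposite
signs. -/
theorem rotation_cancels_QQ_correlation (α β : ℝ) (h : α * β < 0) :
    ∃ (θ ε : ℝ), ε ^ 2 = -(α * β) ∧
      !![Real.cos θ, Real.sin θ; -Real.sin θ, Real.cos θ] *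
          (Matrix.diagonal ![α, β]) *
          (!![Real.cos θ, Real.sin θ; -Real.sin θ, Real.cos θ])ᵀ
        = !![0, ε; ε, α + β] := by
  set t : ℝ := -β / (α - β) with ht
  have hden : α - β ≠ 0 := by
    rcases mul_neg_iff.mp h with ⟨ha, hb⟩ | ⟨ha, hb⟩ <;> intro h0 <;> nlinarith
  have ht01 : 0 ≤ t ∧ t ≤ 1 := by
    rcases mul_neg_iff.mp h with ⟨ha, hb⟩ | ⟨ha, hb⟩
    · constructor
      · apply div_nonneg <;> linarith
      · rw [ht, div_le_one (by linarith)]; linarith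
    · have heq : t = β / (β - α) := by
        rw [ht, div_eq_div_iff hden (by intro h0; nlinarith)]; ring
      constructor
      · rw [heq]; apply div_nonneg <;> linarith
      · rw [heq, div_le_one (by linarith)]; linarith
  obtain ⟨ht0, ht1⟩ := ht01
  have hst : Real.sqrt t ∈ Set.Icc (-1 : ℝ) 1 := by
    constructor
    · linarith [Real.sqrt_nonneg t]
    · rw [show (1:ℝ) = Real.sqrt 1 by simp]
      exact Real.sqrt_le_sqrt ht1
  set θ := Real.arccos (Real.sqrt t) with hθ
  have hc : Real.cos θ = Real.sqrt t := Real.cos_arccos hst.1 hst.2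
  have hc2 : Real.cos θ ^ 2 = t := by rw [hc]; exact Real.sq_sqrt ht0
  have hs2 : Real.sin θ ^ 2 = 1 - t := by
    have := Real.sin_sq_add_cos_sq θ
    linarith [hc2]
  have hD : (Matrix.diagonal ![α, β]) = !![α, 0; 0, β] := by
    ext i j
    fin_cases i <;> fin_cases j <;> simp [Matrix.diagonal]
  refine ⟨θ, (β - α) * Real.cos θ * Real.sin θ, ?_, ?_⟩
  · have heq : ((β - α) * Real.cos θ * Real.sin θ) ^ 2
        = (β - α) ^ 2 * (Real.cos θ ^ 2 * Real.sin θ ^ 2) := by ring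
    rw [heq, hc2, hs2, ht]
    field_simp
    ring
  · rw [hD]
    ext i j
    have hc2' : Real.cos θ ^ 2 * (α - β) = -β := by
      rw [hc2, ht]; field_simp
    have hs2' : Real.sin θ ^ 2 * (α - β) = α := by
      rw [hs2, ht]; field_simp; ring
    have e1 : Real.cos θ ^ 2 * α + Real.sin θ ^ 2 * β = 0 := by
      have key : (Real.cos θ ^ 2 * α + Real.sin θ ^ 2 * β) * (α - β) = 0 := by
        linear_combination α * hc2' + β * hs2'
      exact (mul_eq_zero.mp key).resolve_right hden
    have e2 : Real.sin θ ^ 2 * α + Real.cos θ ^ 2 * β = α + β := by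
      have key : (Real.sin θ ^ 2 * α + Real.cos θ ^ 2 * β - (α + β)) * (α - β) = 0 := by
        linear_combination α * hs2' + β * hc2'
      have h0 := (mul_eq_zero.mp key).resolve_right hden
      linarith
    fin_cases i <;> fin_cases j <;>
      simp [Matrix.mul_apply, Fin.sum_univ_two, Matrix.vecHead, Matrix.vecTail]
    · linarith [e1]
    · ring
    · ring
    · linarith [e2]
end
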